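/- The word problem for twisted arc components: any arc state component (a linear word in arrows {L,R} and bars T, with moves: cancel adjacent equal arrows, cancel adjacent T·T, swap T past an arrow while flipping it, and delete a T at either end of the word (T0 move)) reduces to an alternating arrow word with no bars; moreover the two alternating words of the same length starting with L or with R are equivalent under these moves (so the reduced form is determined by its length alone). Hence Λ_i and Λ'_i are identified in the twisted setting. -/

import Mathlib

/-!
Bars can be pushed to the right end of a word, flipping every arrow they pass; two bars meeting
there cancel by T2 and a single one is deleted by T0. What is left is an arrow word, which collapses
to an alternating word by cancelling equal neighbours. Finally, a bar inserted in front of an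
alternating word by T0 and pushed through it turns the word starting with `L` into the one starting
with `R`, and is then deleted at the end by T0.
-/

/-- Letters on a twisted arc state component: arrows `L`, `R` and a bar `T`. -/
inductive ALetter : Type
  | L | R | T
deriving DecidableEq

open ALetter

/-- The local rewrite rules: cancel two adjacent equal arrows, cancel two
adjacent bars (T2), and pass a bar over an arrow while flipping it. -/
inductive ABase : List ALetter → List ALetter → Prop
  | cancelL : ABase [L, L] []
  | cancelR : ABase [R, R] []
  | t2 : ABase [T, T] []
  | passL : ABase [T, L] [R, T]
  | passR : ABase [R, T] [T, L]
  | passL' : ABase [T, R] [L, T]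
  | passR' : ABase [L, T] [T, R]

/-- A move on a linear word: a local rule applied in any context, or deletion of
a bar at either end of the word (T0 move). -/
inductive AStep : List ALetter → List ALetter → Prop
  | ctx (x y u v : List ALetter) : ABase u v → AStep (x ++ u ++ y) (x ++ v ++ y)
  | t0Head (w : List ALetter) : AStep (T :: w) w
  | t0Last (w : List ALetter) : AStep (w ++ [T]) w

/-- Equivalence of twisted arc words generated by the moves. -/
def AEquiv : List ALetter → List ALetter → Prop := Relation.EqvGen AStep

/-- The alternating arrow word of length `n` starting with `L` (if `b = true`)
or with `R` (if `b = false`). -/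
def altWord (b : Bool) : ℕ → List ALetter
  | 0 => []
  | n + 1 => (if b then L else R) :: altWord (!b) n

def ALetter.flipArrow : ALetter → ALetter
  | L => R
  | R => L
  | T => T

theorem ALetter.T_not_mem_map_flipArrow {w : List ALetter} (hw : T ∉ w) :
    T ∉ w.map flipArrow := by
  simp only [List.mem_map, not_exists, not_and]
  intro a ha
  cases a <;> simp_all [flipArrow]

/-- A local rule applied in context, i.e. a move other than T0. -/
def BaseStep (a b : List ALetter) : Prop :=
  ∃ x y u v, ABase u v ∧ a = x ++ u ++ y ∧ b = x ++ v ++ y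

def BaseEquiv : List ALetter → List ALetter → Prop := Relation.EqvGen BaseStep

namespace BaseEquiv

variable {u v w : List ALetter}

theorem refl (w : List ALetter) : BaseEquiv w w := Relation.EqvGen.refl w

theorem trans (h₁ : BaseEquiv u v) (h₂ : BaseEquiv v w) : BaseEquiv u w :=
  Relation.EqvGen.trans _ _ _ h₁ h₂

instance : Trans BaseEquiv BaseEquiv BaseEquiv := ⟨trans⟩

theorem of_base (h : ABase u v) : BaseEquiv u v :=
  Relation.EqvGen.rel _ _ ⟨[], [], u, v, h, by simp, by simp⟩

theorem append_append (h : BaseEquiv u v) (x y : List ALetter) :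
    BaseEquiv (x ++ u ++ y) (x ++ v ++ y) := by
  induction h with
  | rel a b hab =>
    obtain ⟨p, q, s, t, hst, rfl, rfl⟩ := hab
    exact Relation.EqvGen.rel _ _ ⟨x ++ p, q ++ y, s, t, hst, by simp, by simp⟩
  | refl a => exact refl _
  | symm _ _ _ ih => exact Relation.EqvGen.symm _ _ ih
  | trans _ _ _ _ _ ih₁ ih₂ => exact ih₁.trans ih₂

theorem cons (h : BaseEquiv u v) (c : ALetter) : BaseEquiv (c :: u) (c :: v) := by
  simpa using h.append_append [c] []

theorem append_right (h : BaseEquiv u v) (y : List ALetter) : BaseEquiv (u ++ y) (v ++ y) := by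
  simpa using h.append_append [] y

theorem aequiv (h : BaseEquiv u v) : AEquiv u v :=
  Relation.EqvGen.mono
    (fun _ _ ⟨x, y, s, t, hst, ha, hb⟩ => ha ▸ hb ▸ AStep.ctx x y s t hst) _ _ h

theorem pass_bar (hw : T ∉ w) : BaseEquiv (T :: w) (w.map flipArrow ++ [T]) := by
  induction w with
  | nil => exact refl _
  | cons a w ih =>
    rw [List.mem_cons, not_or] at hw
    have hpass : ABase [T, a] [flipArrow a, T] := by
      cases a
      · exact ABase.passL
      · exact ABase.passL'
      · exact absurd rfl hw.1
    calc BaseEquiv (T :: a :: w) (flipArrow a :: T :: w) := (of_base hpass).append_right w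
      BaseEquiv _ (flipArrow a :: (w.map flipArrow ++ [T])) := (ih hw.2).cons _

theorem exists_barFree (w : List ALetter) :
    ∃ a, T ∉ a ∧ (BaseEquiv w a ∨ BaseEquiv w (a ++ [T])) := by
  induction w with
  | nil => exact ⟨[], List.not_mem_nil, .inl (refl _)⟩
  | cons c w ih =>
    obtain ⟨a, ha, hwa⟩ := ih
    by_cases hc : c = T
    · subst hc
      refine ⟨a.map flipArrow, T_not_mem_map_flipArrow ha, ?_⟩
      rcases hwa with hwa | hwa
      · exact .inr ((hwa.cons T).trans (pass_bar ha))
      · refine .inl ?_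
        calc BaseEquiv (T :: w) (T :: (a ++ [T])) := hwa.cons T
          BaseEquiv _ (a.map flipArrow ++ [T] ++ [T]) := by
            simpa using (pass_bar ha).append_right [T]
          BaseEquiv _ (a.map flipArrow) := by simpa using (of_base ABase.t2).append_append _ []
    · exact ⟨c :: a, by simp [Ne.symm hc, ha], hwa.imp (·.cons c) (·.cons c)⟩

theorem exists_cons_altWord {c : ALetter} (hc : c ≠ T) (b : Bool) (n : ℕ) :
    ∃ b' n', BaseEquiv (c :: altWord b n) (altWord b' n') := by
  obtain ⟨b₀, rfl⟩ : ∃ b₀ : Bool, c = if b₀ then L else R := by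
    cases c
    · exact ⟨true, rfl⟩
    · exact ⟨false, rfl⟩
    · exact absurd rfl hc
  cases n with
  | zero => exact ⟨b₀, 1, refl _⟩
  | succ m =>
    by_cases hb : b = b₀
    · subst hb
      have hcancel : ABase [if b then L else R, if b then L else R] [] := by
        cases b
        · exact ABase.cancelR
        · exact ABase.cancelL
      exact ⟨!b, m, (of_base hcancel).append_right _⟩
    · obtain rfl : b = !b₀ := Bool.eq_not_iff.mpr hb
      exact ⟨b₀, m + 2, refl _⟩

theorem exists_altWord (hw : T ∉ w) : ∃ b n, BaseEquiv w (altWord b n) := by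
  induction w with
  | nil => exact ⟨true, 0, refl _⟩
  | cons c w ih =>
    rw [List.mem_cons, not_or] at hw
    obtain ⟨b, n, hwb⟩ := ih hw.2
    obtain ⟨b', n', hb'⟩ := exists_cons_altWord (Ne.symm hw.1) b n
    exact ⟨b', n', (hwb.cons c).trans hb'⟩

end BaseEquiv

theorem T_not_mem_altWord (b : Bool) (n : ℕ) : T ∉ altWord b n := by
  induction n generalizing b with
  | zero => exact List.not_mem_nil
  | succ n ih => cases b <;> simp [altWord, ih]

theorem map_flipArrow_altWord (b : Bool) (n : ℕ) :
    (altWord b n).map flipArrow = altWord (!b) n := by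
  induction n generalizing b with
  | zero => rfl
  | succ n ih => cases b <;> simp [altWord, ih, flipArrow]

theorem AEquiv.trans {u v w : List ALetter} (h₁ : AEquiv u v) (h₂ : AEquiv v w) : AEquiv u w :=
  Relation.EqvGen.trans _ _ _ h₁ h₂

instance : Trans AEquiv AEquiv AEquiv := ⟨AEquiv.trans⟩

/-- Every twisted arc word reduces to an alternating arrow word
with no bars, and the two alternating words of the same length (starting with
`L` or with `R`) are equivalent under the moves, so the reduced form is
determined by its length alone: `Λ_i` and `Λ'_i` are identified in the twisted
setting. -/
theorem twisted_arc_reduction :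
    (∀ w : List ALetter, ∃ (b : Bool) (n : ℕ), AEquiv w (altWord b n)) ∧
      (∀ n : ℕ, AEquiv (altWord true n) (altWord false n)) := by
  constructor
  · intro w
    obtain ⟨a, ha, hwa⟩ := BaseEquiv.exists_barFree w
    obtain ⟨b, n, hab⟩ := BaseEquiv.exists_altWord ha
    have hwa : AEquiv w a := hwa.elim BaseEquiv.aequiv fun h =>
      h.aequiv.trans (Relation.EqvGen.rel _ _ (AStep.t0Last a))
    exact ⟨b, n, hwa.trans hab.aequiv⟩
  · intro n
    calc AEquiv (altWord true n) (T :: altWord true n) :=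
          Relation.EqvGen.symm _ _ (Relation.EqvGen.rel _ _ (AStep.t0Head _))
      AEquiv _ (altWord false n ++ [T]) := by
          simpa [map_flipArrow_altWord] using
            (BaseEquiv.pass_bar (T_not_mem_altWord true n)).aequiv
      AEquiv _ (altWord false n) := Relation.EqvGen.rel _ _ (AStep.t0Last _)
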